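/- arXiv:2211.16118 — 12 statements merged into one kernel-verified Lean document; each statement's English description precedes it below -/
import Mathlib

section
/- Under the weighted max-based semantics, if D yields final degrees S, and D' = D ∪ X where X consists only of attacks (a_i, a_j) such that either there already exists (a_k, a_j) ∈ D with S(a_i) ≤ S(a_k), or w(a_j) = 0, then D' also yields the final degrees S (Solution Expansion). -/
def att {A : Type*} [Fintype A] [DecidableEq A] (D : Finset (A × A)) (a : A) : Finset A :=
  Finset.univ.filter (fun b => (b, a) ∈ D)

noncomputable def maxDeg {A : Type*} (S : A → ℝ) (s : Finset A) : ℝ :=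
  Finset.fold max 0 S s

lemma le_maxDeg {A : Type*} {S : A → ℝ} {s : Finset A} {b : A} (hb : b ∈ s) :
    S b ≤ maxDeg S s :=
  (Finset.le_fold_max _).2 (Or.inr ⟨b, hb, le_rfl⟩)

lemma maxDeg_le {A : Type*} {S : A → ℝ} {s : Finset A} {c : ℝ} (h0 : 0 ≤ c)
    (h : ∀ b ∈ s, S b ≤ c) : maxDeg S s ≤ c :=
  (Finset.fold_max_le _).2 ⟨h0, h⟩

/-- Solution Expansion for the weighted max-based semantics: if `D` yields the
final degrees `S` and every added attack `(aᵢ, aⱼ) ∈ X` either duplicates an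
existing attack `(aₖ, aⱼ) ∈ D` with `S aᵢ ≤ S aₖ`, or targets an argument with
`w aⱼ = 0`, then `D ∪ X` also yields `S`. -/
theorem mb_solution_expansion {A : Type*} [Fintype A] [DecidableEq A]
    (D X : Finset (A × A)) (w S : A → ℝ)
    (hD : ∀ a, S a = w a / (1 + maxDeg S (att D a)))
    (hX : ∀ p ∈ X, (∃ k, (k, p.2) ∈ D ∧ S p.1 ≤ S k) ∨ w p.2 = 0) :
    ∀ a, S a = w a / (1 + maxDeg S (att (D ∪ X) a)) := by
  intro a
  by_cases hw : w a = 0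
  · rw [hD a, hw]; simp
  · suffices h : maxDeg S (att (D ∪ X) a) = maxDeg S (att D a) by
      rw [h]; exact hD a
    apply le_antisymm
    · apply maxDeg_le
      · exact ((Finset.le_fold_max _).2 (Or.inl le_rfl) : (0:ℝ) ≤ _)
      · intro b hb
        simp only [att, Finset.mem_filter, Finset.mem_union] at hb
        rcases hb.2 with h | h
        · exact le_maxDeg (by simp [att, h])
        · rcases hX (b, a) h with ⟨k, hk, hle⟩ | h0
          · exact hle.trans (le_maxDeg (by simp [att, hk]))
          · exact absurd h0 hw
    · apply maxDeg_le
      · exact ((Finset.le_fold_max _).2 (Or.inl le_rfl) : (0:ℝ) ≤ _)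
      · intro b hb
        simp only [att, Finset.mem_filter] at hb
        exact le_maxDeg (by simp [att, hb.2])
end

section
/- Under the weighted max-based semantics, if D yields final degrees S and (a_i, a_0) ∈ D, and D' = D \ X where X ⊆ {(a_j, a_0) ∈ D : a_j ≠ a_i and S(a_j) ≤ S(a_i)} ∪ {(a_j, a_0) : w(a_0) = 0}, then D' also yields S (Solution Contraction). -/
/-- Solution Contraction for the weighted max-based semantics: if `D` yields `S`
and `(aᵢ, a₀) ∈ D`, then removing a set `X` of attacks `(aⱼ, a₀)` with
`aⱼ ≠ aᵢ` and `S aⱼ ≤ S aᵢ` (or attacks `(aⱼ, a₀)` where `w a₀ = 0`)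
still yields `S`. -/
theorem mb_solution_contraction {A : Type*} [Fintype A] [DecidableEq A]
    (D X : Finset (A × A)) (w S : A → ℝ) (ai a0 : A)
    (hD : ∀ a, S a = w a / (1 + maxDeg S (att D a)))
    (hmem : (ai, a0) ∈ D)
    (hX : ∀ p ∈ X, (p ∈ D ∧ p.2 = a0 ∧ p.1 ≠ ai ∧ S p.1 ≤ S ai) ∨ (p.2 = a0 ∧ w a0 = 0)) :
    ∀ a, S a = w a / (1 + maxDeg S (att (D \ X) a)) := by
  intro a
  by_cases ha : a = a0
  · subst ha
    by_cases hw : w a = 0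
    · rw [hD a, hw, zero_div, zero_div]
    · have hX' : ∀ p ∈ X, p ∈ D ∧ p.2 = a ∧ p.1 ≠ ai ∧ S p.1 ≤ S ai := by
        intro p hp
        rcases hX p hp with h | ⟨_, h0⟩
        · exact h
        · exact absurd h0 hw
      have hmax : maxDeg S (att (D \ X) a) = maxDeg S (att D a) := by
        have hai : ai ∈ att (D \ X) a := by
          simp only [att, Finset.mem_filter, Finset.mem_univ, Finset.mem_sdiff, true_and]
          refine ⟨hmem, fun hXm => ?_⟩
          exact (hX' _ hXm).2.2.1 rfl
        apply le_antisymm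
        · rw [maxDeg, Finset.fold_max_le]
          refine ⟨?_, fun x hx => ?_⟩
          · rw [maxDeg, Finset.le_fold_max]; left; rfl
          · rw [maxDeg, Finset.le_fold_max]; right
            refine ⟨x, ?_, le_rfl⟩
            simp only [att, Finset.mem_filter, Finset.mem_univ, Finset.mem_sdiff, true_and] at hx ⊢
            exact hx.1
        · rw [maxDeg, Finset.fold_max_le]
          refine ⟨?_, fun x hx => ?_⟩
          · rw [maxDeg, Finset.le_fold_max]; left; rfl
          · simp only [att, Finset.mem_filter, Finset.mem_univ, true_and] at hx
            by_cases hxX : (x, a) ∈ X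
            · have := (hX' _ hxX).2.2.2
              calc S x ≤ S ai := this
                _ ≤ maxDeg S (att (D \ X) a) := by
                    rw [maxDeg, Finset.le_fold_max]; right; exact ⟨ai, hai, le_rfl⟩
            · rw [maxDeg, Finset.le_fold_max]; right
              refine ⟨x, ?_, le_rfl⟩
              simp only [att, Finset.mem_filter, Finset.mem_univ, Finset.mem_sdiff, true_and]
              exact ⟨hx, hxX⟩
      rw [hmax]; exact hD a
  · have : att (D \ X) a = att D a := by
      ext b
      simp only [att, Finset.mem_filter, Finset.mem_univ, Finset.mem_sdiff, true_and]
      constructor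
      · exact fun h => h.1
      · intro h
        refine ⟨h, fun hXm => ha ?_⟩
        rcases hX _ hXm with h' | h' <;> simp_all
    rw [this]; exact hD a
end

section
/- Given a multiset M = {m_1,…,m_n} of positive reals with sum m*, and T ∈ ℝ⁺ with T ≤ n·m* (in particular T ≤ m* suffices), construct arguments a_0,…,a_n with w(a_i) = S(a_i) = 0.4·m_i/(n·m*) for i ≥ 1, w(a_0) = 1, S(a_0) = n·m*/(0.4T + n·m*). Then if M' ⊆ M satisfies Σ_{m ∈ M'} m = T, the attack set D = {(a_i, a_0) : m_i ∈ M'} realizes S under the weighted h-categoriser semantics, i.e., for all a, S(a) = w(a)/(1 + Σ_{b attacks a} S(b)). -/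
/-- Forward direction of the subset-sum reduction for the weighted
h-categoriser semantics: given a subset-sum solution `M' ⊆ M` with sum `T`,
the attack set `{(aᵢ, a₀) : mᵢ ∈ M'}` realizes the constructed target
degrees `S`. Here `a₀` is encoded as `none` and `aᵢ` (i ≥ 1) as `some i`. -/
theorem hc_ssp_forward (n : ℕ) (hn : 0 < n) (m : Fin n → ℝ) (hm : ∀ i, 0 < m i)
    (T : ℝ) (hT : 0 < T) (hTle : T ≤ n * (∑ i, m i))
    (M' : Finset (Fin n)) (hsum : ∑ i ∈ M', m i = T) :
    let mstar : ℝ := ∑ i, m i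
    let w : Option (Fin n) → ℝ := fun x => x.elim 1 (fun i => 0.4 * m i / (n * mstar))
    let S : Option (Fin n) → ℝ :=
      fun x => x.elim (n * mstar / (0.4 * T + n * mstar)) (fun i => 0.4 * m i / (n * mstar))
    let D : Finset (Option (Fin n) × Option (Fin n)) :=
      M'.image (fun i => (some i, none))
    ∀ a, S a = w a / (1 + ∑ b ∈ att D a, S b) := by
  intro mstar w S D a
  have hms : 0 < mstar := Finset.sum_pos (fun i _ => hm i)
    (Finset.univ_nonempty_iff.mpr ⟨⟨0, hn⟩⟩)
  have hnm : 0 < (n : ℝ) * mstar := by positivity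
  cases a with
  | some i =>
    have h : att D (some i) = ∅ := by
      ext b; simp [att, D]
    simp [h, S, w]
  | none =>
    have hatt : att D none = M'.image some := by
      ext b
      cases b <;> simp [att, D]
    have hinj : ∀ x ∈ M', ∀ y ∈ M', some x = some y → x = y := by
      intro x _ y _ h; exact Option.some_injective _ h
    rw [hatt, Finset.sum_image hinj]
    simp only [S, w, Option.elim]
    have hsum' : ∑ i ∈ M', 0.4 * m i / (↑n * mstar) = 0.4 * T / (↑n * mstar) := by
      rw [← Finset.sum_div, ← Finset.mul_sum, hsum]
    rw [hsum']
    have hden : (0 : ℝ) < 0.4 * T + ↑n * mstar := by positivity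
    field_simp
    ring
end

section
/- In the subset-sum reduction for the h-categoriser semantics, any attack set D realizing the target degrees S cannot contain the self-attack (a_0, a_0). Specifically: if σ(a_0) = 1/(1 + σ(a_0) + Y) with Y ≥ 0, then σ(a_0) ≤ (−1 + √5)/2 ≈ 0.618; but the target value S(a_0) = n·m*/(0.4T + n·m*) with T ≤ n·m* satisfies S(a_0) ≥ 1/1.4 ≈ 0.714 > (−1+√5)/2, a contradiction. -/
/-- In the h-categoriser subset-sum reduction, the self-attack `(a₀, a₀)` is
impossible: any degree `x` satisfying `x = 1/(1 + x + Y)` with `Y ≥ 0` is at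
most `(−1 + √5)/2`, while the target degree `S(a₀) = n·m*/(0.4T + n·m*)`
(with `T ≤ n·m*`) is at least `1/1.4`; hence `x ≠ S(a₀)`. -/
theorem hc_no_self_attack (n mstar T x Y : ℝ)
    (hn : 0 < n) (hmstar : 0 < mstar) (hT : 0 < T) (hTle : T ≤ n * mstar)
    (hx : 0 ≤ x) (hY : 0 ≤ Y) (hfix : x = 1 / (1 + x + Y)) :
    x ≤ (-1 + Real.sqrt 5) / 2 ∧
    1 / 1.4 ≤ n * mstar / (0.4 * T + n * mstar) ∧
    x ≠ n * mstar / (0.4 * T + n * mstar) := by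
  have hden : 0 < 1 + x + Y := by linarith
  have hxeq : x * (1 + x + Y) = 1 := by
    field_simp at hfix
    linarith [hfix]
  have hquad : x * x + x ≤ 1 := by nlinarith
  have hs5 : Real.sqrt 5 ^ 2 = 5 := Real.sq_sqrt (by norm_num)
  have hs5pos : (0:ℝ) ≤ Real.sqrt 5 := Real.sqrt_nonneg 5
  have h1 : x ≤ (-1 + Real.sqrt 5) / 2 := by nlinarith
  have hnm : 0 < n * mstar := mul_pos hn hmstar
  have hden2 : 0 < 0.4 * T + n * mstar := by linarith
  have h2 : 1 / 1.4 ≤ n * mstar / (0.4 * T + n * mstar) := by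
    rw [div_le_div_iff₀ (by norm_num) hden2]
    linarith
  refine ⟨h1, h2, ?_⟩
  have hlt : (-1 + Real.sqrt 5) / 2 < 1 / 1.4 := by nlinarith
  intro heq
  rw [heq] at h1
  linarith
end

section
/- If an attack set D realizes the target degrees S in the h-categoriser subset-sum reduction (and contains no self-attack on a_0 and no attacks into a_1,…,a_n), then M' = {S(b)·n·m*/0.4 : (b, a_0) ∈ D} is a subset of M whose elements sum to T. Concretely, Σ_{(b,a_0)∈D} S(b) = (1/S(a_0)) − 1 = 0.4T/(n·m*), hence Σ_{m' ∈ M'} m' = T. -/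
/-- Backward direction of the subset-sum reduction for the h-categoriser
semantics: if an attack set `D` realizes the constructed degrees `S` (with no
self-attack on `a₀` and no attacks into `a₁, …, aₙ`), then the degrees of the
attackers of `a₀` sum to `0.4T/(n·m*)` and the corresponding elements of `M`
sum to `T`. Here `a₀` is `none` and `aᵢ` is `some i`. -/
theorem hc_ssp_backward (n : ℕ) (hn : 0 < n) (m : Fin n → ℝ) (hm : ∀ i, 0 < m i)
    (T : ℝ) (hT : 0 < T) (hTle : T ≤ n * (∑ i, m i))
    (D : Finset (Option (Fin n) × Option (Fin n)))
    (hself : (none, none) ∉ D)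
    (hunattacked : ∀ (i : Fin n) (p : Option (Fin n)), (p, some i) ∉ D)
    (hreal : ∀ a : Option (Fin n),
      (fun x => x.elim ((n : ℝ) * (∑ i, m i) / (0.4 * T + n * (∑ i, m i)))
          (fun i => 0.4 * m i / (n * (∑ i, m i)))) a =
      (fun x => x.elim (1 : ℝ) (fun i => 0.4 * m i / (n * (∑ i, m i)))) a /
        (1 + ∑ b ∈ att D a,
          (fun x => x.elim ((n : ℝ) * (∑ i, m i) / (0.4 * T + n * (∑ i, m i)))
            (fun i => 0.4 * m i / (n * (∑ i, m i)))) b)) :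
    (∑ b ∈ att D (none : Option (Fin n)),
        (fun x => x.elim ((n : ℝ) * (∑ i, m i) / (0.4 * T + n * (∑ i, m i)))
          (fun i => 0.4 * m i / (n * (∑ i, m i)))) b)
      = 0.4 * T / (n * (∑ i, m i)) ∧
    (∑ i ∈ Finset.univ.filter (fun i : Fin n => (some i, none) ∈ D), m i) = T := by
  have hM : (0:ℝ) < ∑ i, m i :=
    Finset.sum_pos (fun i _ => hm i) ⟨⟨0, hn⟩, Finset.mem_univ _⟩
  have hn' : (0:ℝ) < (n:ℝ) := by exact_mod_cast hn
  have hnM : (0:ℝ) < (n:ℝ) * ∑ i, m i := by positivity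
  have hden : (0:ℝ) < 0.4 * T + (n:ℝ) * ∑ i, m i := by positivity
  -- rewrite the attacker set of none as an image
  have hkey : att D (none : Option (Fin n)) =
      (Finset.univ.filter (fun i : Fin n => (some i, none) ∈ D)).image some := by
    ext b
    cases b with
    | none => simp [att, hself]
    | some i => simp [att]
  have hsum : (∑ b ∈ att D (none : Option (Fin n)),
        (fun x => x.elim ((n : ℝ) * (∑ i, m i) / (0.4 * T + n * (∑ i, m i)))
          (fun i => 0.4 * m i / (n * (∑ i, m i)))) b)
      = ∑ i ∈ Finset.univ.filter (fun i : Fin n => (some i, none) ∈ D),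
          0.4 * m i / ((n:ℝ) * ∑ i, m i) := by
    rw [hkey, Finset.sum_image (by intro a _ b _ h; exact Option.some_injective _ h)]
    rfl
  have h0 : ((n:ℝ) * ∑ i, m i) / (0.4 * T + n * (∑ i, m i)) =
      1 / (1 + ∑ b ∈ att D (none : Option (Fin n)),
        (fun x => x.elim ((n : ℝ) * (∑ i, m i) / (0.4 * T + n * (∑ i, m i)))
          (fun i => 0.4 * m i / (n * (∑ i, m i)))) b) := hreal none
  rw [hsum] at h0
  set SM := ∑ i ∈ Finset.univ.filter (fun i : Fin n => (some i, none) ∈ D),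
      0.4 * m i / ((n:ℝ) * ∑ i, m i) with hSM
  have hne : (1 : ℝ) + SM ≠ 0 := by
    intro h
    rw [h, div_zero] at h0
    exact absurd h0 (ne_of_gt (div_pos hnM hden))
  have hSval : SM = 0.4 * T / ((n:ℝ) * ∑ i, m i) := by
    field_simp at h0
    field_simp
    nlinarith [h0]
  constructor
  · rw [hsum, hSval]
  · have h3 : (∑ i ∈ Finset.univ.filter (fun i : Fin n => (some i, none) ∈ D),
        0.4 * m i) / ((n:ℝ) * ∑ i, m i) = 0.4 * T / ((n:ℝ) * ∑ i, m i) := by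
      rw [Finset.sum_div]; exact hSval
    have h4 : (∑ i ∈ Finset.univ.filter (fun i : Fin n => (some i, none) ∈ D),
        0.4 * m i) = 0.4 * T := by
      have := mul_right_cancel₀ (inv_ne_zero (ne_of_gt hnM)) (by
        simpa [div_eq_mul_inv] using h3)
      exact this
    rw [← Finset.mul_sum] at h4
    linarith
end

section
/- Given a k-subset-sum instance (M = {m_1,…,m_n}, T, k) with m* = max M and u as above, construct arguments a_0,…,a_n with w(a_i) = S(a_i) = u·m_i/m* for i ≥ 1, w(a_0) = 1, and S(a_0) = 1/(1 + k + T·u/(k·m*)). If M' ⊆ M with |M'| = k and Σ_{m ∈ M'} m = T, then D = {(a_i, a_0) : m_i ∈ M'} realizes S under the weighted cardinality-based semantics: S(a_0) = w(a_0)/(1 + k + (Σ_{b attacks a_0} S(b))/k), and each a_i (i ≥ 1) being unattacked has degree w(a_i). -/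
/-- Attackers of `a` with strictly positive initial weight. -/
noncomputable def attStar {A : Type*} [Fintype A] [DecidableEq A]
    (D : Finset (A × A)) (w : A → ℝ) (a : A) : Finset A :=
  Finset.univ.filter (fun b => (b, a) ∈ D ∧ 0 < w b)

/-- `D` realizes `S` under the weighted cardinality-based semantics. -/
noncomputable def cbRealizes {A : Type*} [Fintype A] [DecidableEq A]
    (D : Finset (A × A)) (w S : A → ℝ) : Prop :=
  ∀ a, if (attStar D w a).card = 0 then S a = w a
    else S a = w a / (1 + (attStar D w a).card +
      (∑ b ∈ attStar D w a, S b) / (attStar D w a).card)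

open Finset

section Star

variable {ι A : Type*} [Fintype A] [DecidableEq A]

theorem attStar_image_pair_self (s : Finset ι) (f : ι → A) (a : A) (w : A → ℝ)
    (hw : ∀ i ∈ s, 0 < w (f i)) :
    attStar (s.image fun i => (f i, a)) w a = s.image f := by
  ext b
  simp only [attStar, mem_filter, mem_univ, true_and, mem_image, Prod.mk.injEq, and_true]
  constructor
  · exact fun ⟨hb, _⟩ => hb
  · rintro ⟨i, hi, rfl⟩
    exact ⟨⟨i, hi, rfl⟩, hw i hi⟩

theorem attStar_image_pair_of_ne (s : Finset ι) (f : ι → A) {a b : A} (w : A → ℝ)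
    (hba : b ≠ a) : attStar (s.image fun i => (f i, a)) w b = ∅ := by
  ext c
  simp only [attStar, mem_filter, mem_univ, true_and, mem_image, Prod.mk.injEq,
    notMem_empty, iff_false]
  rintro ⟨⟨i, -, -, rfl⟩, -⟩
  exact hba rfl

theorem cbRealizes_star (s : Finset ι) (hs : s.Nonempty) (f : ι → A) (hf : Set.InjOn f s)
    (a : A) (w S : A → ℝ) (hw : ∀ i ∈ s, 0 < w (f i)) (hS : ∀ b ≠ a, S b = w b)
    (hSa : S a = w a / (1 + s.card + (∑ i ∈ s, S (f i)) / s.card)) :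
    cbRealizes (s.image fun i => (f i, a)) w S := by
  intro b
  by_cases hba : b = a
  · subst hba
    have hcard : (s.image f).card = s.card := card_image_of_injOn hf
    rw [attStar_image_pair_self s f b w hw, hcard, if_neg hs.card_pos.ne',
      sum_image fun i hi j hj h => hf hi hj h]
    exact hSa
  · rw [attStar_image_pair_of_ne s f w hba, if_pos card_empty]
    exact hS b hba

end Star

theorem kssp_const_pos {k : ℝ} (hk : 0 < k) :
    0 < (Real.sqrt (k ^ 2 + 2 * k + 4 / k + 1) - k - 1) / 3 := by
  have hlt : k + 1 < Real.sqrt (k ^ 2 + 2 * k + 4 / k + 1) := by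
    rw [Real.lt_sqrt (by positivity)]
    nlinarith [div_pos four_pos hk]
  linarith

/-- `a₀` is `none`, `aᵢ` is `some i`, and `m*` is `mstar`. -/
theorem cb_kssp_forward_general (n : ℕ) (m : Fin n → ℝ) (hm : ∀ i, 0 < m i)
    (mstar : ℝ) (hmem : ∃ i, m i = mstar)
    (T : ℝ)
    (M' : Finset (Fin n)) (hk : 1 ≤ M'.card) (hsum : ∑ i ∈ M', m i = T) :
    let k : ℝ := M'.card
    let u : ℝ := (Real.sqrt (k^2 + 2 * k + 4 / k + 1) - k - 1) / 3
    let w : Option (Fin n) → ℝ := fun x => x.elim 1 (fun i => u * m i / mstar)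
    let S : Option (Fin n) → ℝ :=
      fun x => x.elim (1 / (1 + k + T * u / (k * mstar))) (fun i => u * m i / mstar)
    let D : Finset (Option (Fin n) × Option (Fin n)) :=
      M'.image (fun i => (some i, none))
    cbRealizes D w S := by
  intro k u w S D
  obtain ⟨i₀, rfl⟩ := hmem
  have hk0 : (0 : ℝ) < k := by simp only [k]; exact_mod_cast hk
  have hu : 0 < u := kssp_const_pos hk0
  have hsumS : ∑ i ∈ M', S (some i) = T * u / m i₀ := by
    simp only [S, Option.elim_some, ← sum_div, ← sum_mul, hsum, mul_comm u]
  refine cbRealizes_star M' (card_pos.mp hk) some (Option.some_injective _).injOn none w S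
    (fun i _ => div_pos (mul_pos hu (hm i)) (hm i₀)) ?_ ?_
  · rintro (_ | i) h
    exacts [absurd rfl h, rfl]
  · rw [hsumS]
    simp only [S, w, Option.elim_none, k]
    field_simp

/-- Forward direction of the k-subset-sum reduction for the weighted
cardinality-based semantics: a k-subset-sum solution `M'` (of size `k`,
summing to `T`) yields an attack set realizing the constructed degrees.
Here `m* = max M`, `u = (√(k² + 2k + 4/k + 1) − k − 1)/3`, `a₀` is `none`
and `aᵢ` is `some i`. -/
theorem cb_kssp_forward (n : ℕ) (hn : 0 < n) (m : Fin n → ℝ) (hm : ∀ i, 0 < m i)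
    (mstar : ℝ) (hub : ∀ i, m i ≤ mstar) (hmem : ∃ i, m i = mstar)
    (T : ℝ) (hT : 0 < T)
    (M' : Finset (Fin n)) (hk : 1 ≤ M'.card) (hsum : ∑ i ∈ M', m i = T) :
    let k : ℝ := M'.card
    let u : ℝ := (Real.sqrt (k^2 + 2 * k + 4 / k + 1) - k - 1) / 3
    let w : Option (Fin n) → ℝ := fun x => x.elim 1 (fun i => u * m i / mstar)
    let S : Option (Fin n) → ℝ :=
      fun x => x.elim (1 / (1 + k + T * u / (k * mstar))) (fun i => u * m i / mstar)
    let D : Finset (Option (Fin n) × Option (Fin n)) :=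
      M'.image (fun i => (some i, none))
    cbRealizes D w S :=
  cb_kssp_forward_general n m hm mstar hmem T M' hk hsum
end

section
/- For the cardinality-based semantics, if an argument a with w(a) ∈ (0,1] and S(a) > 0 has exactly k ≥ 1 attackers with positive weight whose degrees lie in [0,1], then S(a) ∈ [w(a)/(k+2), w(a)/(k+1)]; consequently the number of attackers k satisfies ⌈w(a)/S(a) − 2⌉ ≤ k ≤ ⌊w(a)/S(a) − 1⌋. -/
/-- Under the cardinality-based semantics, an argument `a` with `w a ∈ (0,1]`,
`S a > 0` and exactly `k ≥ 1` positive-weight attackers whose degrees lie in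
`[0,1]` satisfies `S a ∈ [w a/(k+2), w a/(k+1)]`, and consequently
`⌈w a/S a − 2⌉ ≤ k ≤ ⌊w a/S a − 1⌋`. -/
theorem cb_k_bounds (w S : ℝ) (k : ℕ) (hk : 1 ≤ k)
    (t : Fin k → ℝ) (ht : ∀ i, 0 ≤ t i ∧ t i ≤ 1)
    (hw : 0 < w ∧ w ≤ 1) (hS : 0 < S)
    (heq : S = w / (1 + (k : ℝ) + (∑ i, t i) / k)) :
    (w / ((k : ℝ) + 2) ≤ S ∧ S ≤ w / ((k : ℝ) + 1)) ∧
    (⌈w / S - 2⌉ ≤ (k : ℤ) ∧ (k : ℤ) ≤ ⌊w / S - 1⌋) := by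
  obtain ⟨hw0, hw1⟩ := hw
  have hkpos : (0:ℝ) < k := by positivity
  have hT0 : 0 ≤ ∑ i, t i := Finset.sum_nonneg fun i _ => (ht i).1
  have hTk : ∑ i, t i ≤ k := by
    calc ∑ i, t i ≤ ∑ _i : Fin k, (1:ℝ) :=
          Finset.sum_le_sum fun i _ => (ht i).2
      _ = k := by simp
  set D : ℝ := 1 + (k : ℝ) + (∑ i, t i) / k with hD
  have hDlo : (k:ℝ) + 1 ≤ D := by
    have h : 0 ≤ (∑ i, t i) / k := by positivity
    rw [hD]; linarith
  have hDhi : D ≤ (k:ℝ) + 2 := by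
    have : (∑ i, t i) / k ≤ 1 := by
      rw [div_le_one hkpos]; exact hTk
    rw [hD]; linarith
  have hDpos : 0 < D := by linarith
  have h1 : w / ((k:ℝ) + 2) ≤ S := by
    rw [heq]; exact div_le_div_of_nonneg_left hw0.le hDpos hDhi
  have h2 : S ≤ w / ((k:ℝ) + 1) := by
    rw [heq]; exact div_le_div_of_nonneg_left hw0.le (by linarith) hDlo
  have hwS : w / S = D := by
    rw [heq]
    field_simp
  refine ⟨⟨h1, h2⟩, ?_, ?_⟩
  · rw [hwS]
    exact Int.ceil_le.2 (by push_cast; linarith)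
  · rw [hwS]
    exact Int.le_floor.2 (by push_cast; linarith)
end

section
/- For each integer k ≥ 1, the function f(x) = 1/(1 + k + x/k) on [0,∞) has a unique fixed point, given by x* = (−k² + √(k(k³ + 2k² + k + 4)) − k)/2, and 0 < x* ≤ 1. -/
/-- For each integer `k ≥ 1`, the function `f(x) = 1/(1 + k + x/k)` on `[0,∞)`
has the unique fixed point `x* = (−k² + √(k(k³ + 2k² + k + 4)) − k)/2`, and
`0 < x* ≤ 1`. -/
theorem cb_self_attack_fixed_point (k : ℕ) (hk : 1 ≤ k) :
    let xstar : ℝ := (-(k : ℝ)^2 + Real.sqrt (k * ((k : ℝ)^3 + 2 * k^2 + k + 4)) - k) / 2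
    (1 / (1 + (k : ℝ) + xstar / k) = xstar) ∧
    (∀ x : ℝ, 0 ≤ x → 1 / (1 + (k : ℝ) + x / k) = x → x = xstar) ∧
    0 < xstar ∧ xstar ≤ 1 := by
  intro xstar
  have hk1 : (1 : ℝ) ≤ (k : ℝ) := by exact_mod_cast hk
  have hkpos : (0 : ℝ) < (k : ℝ) := by linarith
  set D : ℝ := k * ((k : ℝ)^3 + 2 * k^2 + k + 4) with hD
  have hDnn : 0 ≤ D := by positivity
  set s : ℝ := Real.sqrt D with hs
  have hs2 : s ^ 2 = D := Real.sq_sqrt hDnn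
  have hsnn : 0 ≤ s := Real.sqrt_nonneg _
  have hsgt : (k : ℝ)^2 + k < s := by
    nlinarith [hs2, sq_nonneg (s - ((k:ℝ)^2 + k)), sq_nonneg (s + ((k:ℝ)^2 + k))]
  have hxpos : 0 < xstar := by
    show 0 < (-(k : ℝ)^2 + s - k) / 2
    linarith
  have hquad : xstar ^ 2 + ((k : ℝ)^2 + k) * xstar - k = 0 := by
    show ((-(k : ℝ)^2 + s - k) / 2) ^ 2 + ((k : ℝ)^2 + k) * ((-(k : ℝ)^2 + s - k) / 2) - k = 0
    nlinarith [hs2]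
  have hden : (0 : ℝ) < 1 + (k : ℝ) + xstar / k := by positivity
  have hfix : 1 / (1 + (k : ℝ) + xstar / k) = xstar := by
    rw [div_eq_iff (ne_of_gt hden)]
    field_simp
    nlinarith [hquad]
  refine ⟨hfix, ?_, hxpos, ?_⟩
  · intro x hx hfx
    have hdenx : (0 : ℝ) < 1 + (k : ℝ) + x / k := by positivity
    rw [div_eq_iff (ne_of_gt hdenx)] at hfx
    have hk0 : (k : ℝ) ≠ 0 := ne_of_gt hkpos
    have hq : x ^ 2 + ((k : ℝ)^2 + k) * x - k = 0 := by
      field_simp at hfx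
      linarith [hfx]
    have hfac : (x - xstar) * (x + xstar + ((k : ℝ)^2 + k)) = 0 := by
      linear_combination hq - hquad
    rcases mul_eq_zero.mp hfac with h | h
    · linarith
    · nlinarith [hxpos, hx]
  · show (-(k : ℝ)^2 + s - k) / 2 ≤ 1
    have : s ≤ (k : ℝ)^2 + k + 2 := by
      nlinarith [hs2, hsnn]
    linarith
end

section
/- For all integers k ≥ 1 and reals T, m* > 0 with T/(k·m*) ≥ u where u = (√(k²+2k+4/k+1) − k − 1)/3: the fixed point x* = (−k² + √(k(k³+2k²+k+4)) − k)/2 of f(x) = 1/(1+k+x/k) satisfies x* < 1/(1 + k + u) ≤ 1/(1 + k + T·u/(k·m*)) whenever T·u/(k·m*) ≤ u. -/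
set_option maxHeartbeats 1000000


/-- Key inequality ruling out a self-attack on `a₀` in the cardinality-based
reduction: the fixed point `x*` of `f(x) = 1/(1 + k + x/k)` is strictly below
`1/(1 + k + u)`, which in turn is at most the target degree
`1/(1 + k + Tu/(k·m*))` whenever `Tu/(k·m*) ≤ u`. -/
theorem cb_no_self_attack (k : ℕ) (hk : 1 ≤ k) (T mstar : ℝ)
    (hT : 0 < T) (hmstar : 0 < mstar)
    (hge : (T / ((k : ℝ) * mstar)) ≥
      (Real.sqrt ((k : ℝ)^2 + 2 * k + 4 / k + 1) - k - 1) / 3)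
    (hle : T * ((Real.sqrt ((k : ℝ)^2 + 2 * k + 4 / k + 1) - k - 1) / 3) / ((k : ℝ) * mstar) ≤
      (Real.sqrt ((k : ℝ)^2 + 2 * k + 4 / k + 1) - k - 1) / 3) :
    let u : ℝ := (Real.sqrt ((k : ℝ)^2 + 2 * k + 4 / k + 1) - k - 1) / 3
    let xstar : ℝ := (-(k : ℝ)^2 + Real.sqrt (k * ((k : ℝ)^3 + 2 * k^2 + k + 4)) - k) / 2
    xstar < 1 / (1 + (k : ℝ) + u) ∧
    1 / (1 + (k : ℝ) + u) ≤ 1 / (1 + (k : ℝ) + T * u / (k * mstar)) := by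
  intro u xstar
  have hk1 : (1 : ℝ) ≤ (k : ℝ) := by exact_mod_cast hk
  have hkpos : (0 : ℝ) < (k : ℝ) := by linarith
  set s : ℝ := Real.sqrt ((k : ℝ)^2 + 2 * k + 4 / k + 1) with hs_def
  have hA : (0:ℝ) ≤ (k : ℝ)^2 + 2 * k + 4 / k + 1 := by positivity
  have hs2 : s ^ 2 = (k : ℝ)^2 + 2 * k + 4 / k + 1 := Real.sq_sqrt hA
  have hsnn : 0 ≤ s := Real.sqrt_nonneg _
  have h4k : 4 / (k : ℝ) ≤ 4 := by
    rw [div_le_iff₀ hkpos]; nlinarith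
  have h4kpos : 0 < 4 / (k : ℝ) := by positivity
  have hsgt : (k : ℝ) + 1 < s := by nlinarith [sq_nonneg (s - (k + 1))]
  have hupos : 0 < u := by simp only [u]; linarith
  have hsqrt2 : Real.sqrt ((k : ℝ) * ((k : ℝ)^3 + 2 * k^2 + k + 4)) = (k : ℝ) * s := by
    have : (k : ℝ) * ((k : ℝ)^3 + 2 * k^2 + k + 4) = ((k : ℝ) * s) ^ 2 := by
      have h4 : (k:ℝ)^2 * (4 / k) = 4 * k := by field_simp
      nlinarith [hs2]
    rw [this, Real.sqrt_sq (by positivity)]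
  have hxstar : xstar = (k : ℝ) * (s - k - 1) / 2 := by
    simp only [xstar, hsqrt2]; ring
  have hDpos : 0 < 1 + (k : ℝ) + u := by linarith
  constructor
  · rw [lt_div_iff₀ hDpos, hxstar]
    -- key: (s - (k+1))*(s + (k+1)) = 4/k, and s - (k+1) < 2/(k(k+1))
    have hkey : (s - (k + 1)) * (s + (k + 1)) = 4 / (k : ℝ) := by
      linear_combination hs2
    have hmul : (k : ℝ) * (s - (k + 1)) * (s + (k + 1)) = 4 := by
      rw [mul_assoc, hkey]; field_simp
    have hd : 0 < s - ((k : ℝ) + 1) := by linarith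
    have hlt : (k : ℝ) * (s - (k + 1)) * ((k : ℝ) + 1) < 2 := by
      nlinarith [hmul, mul_pos (mul_pos hkpos hd) hd]
    simp only [u]
    nlinarith [hmul, hlt]
  · apply one_div_le_one_div_of_le
    · have hnum : 0 ≤ T * u / ((k : ℝ) * mstar) := by positivity
      linarith
    · have hle' : T * u / ((k : ℝ) * mstar) ≤ u := hle
      linarith [hle']
end

section
/- Under the weighted h-categoriser semantics, solutions are closed under attacker substitution: if D realizes S, x ∈ A, Z ⊆ A × {x} with Σ_{(z,x) ∈ Z} S(z) = (w(x) − S(x))/S(x) (when w(x) ≠ 0), and D' = (D ∩ (A × (A \ {x}))) ∪ Z, then D' also realizes S. -/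
def Realizes {A : Type*} [Fintype A] [DecidableEq A] (w : A → ℝ) (D : Finset (A × A))
    (S : A → ℝ) : Prop :=
  ∀ a, S a = w a / (1 + ∑ b ∈ att D a, S b)

section Attackers

variable {A : Type*} [Fintype A] [DecidableEq A] {D Z : Finset (A × A)} {x : A}

theorem att_filter_ne_union_of_ne (hZ : ∀ p ∈ Z, p.2 = x) {a : A} (hax : a ≠ x) :
    att (D.filter (fun p => p.2 ≠ x) ∪ Z) a = att D a := by
  ext b
  simp only [att, Finset.mem_filter, Finset.mem_univ, Finset.mem_union, true_and]
  exact ⟨fun h => h.elim And.left fun hb => absurd (hZ _ hb) hax, fun h => Or.inl ⟨h, hax⟩⟩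

theorem att_filter_ne_union_self (hZ : ∀ p ∈ Z, p.2 = x) :
    att (D.filter (fun p => p.2 ≠ x) ∪ Z) x = Z.image Prod.fst := by
  ext b
  simp only [att, Finset.mem_filter, Finset.mem_univ, Finset.mem_union, Finset.mem_image,
    true_and, ne_eq, not_true_eq_false, and_false, false_or]
  constructor
  · exact fun hb => ⟨(b, x), hb, rfl⟩
  · rintro ⟨p, hp, rfl⟩
    rwa [← hZ p hp]

theorem sum_att_filter_ne_union_self {M : Type*} [AddCommMonoid M] (f : A → M)
    (hZ : ∀ p ∈ Z, p.2 = x) :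
    ∑ b ∈ att (D.filter (fun p => p.2 ≠ x) ∪ Z) x, f b = ∑ p ∈ Z, f p.1 := by
  rw [att_filter_ne_union_self hZ, Finset.sum_image]
  intro p hp q hq hpq
  exact Prod.ext hpq ((hZ p hp).trans (hZ q hq).symm)

end Attackers

theorem Realizes.ne_zero {A : Type*} [Fintype A] [DecidableEq A] {w S : A → ℝ}
    {D : Finset (A × A)} (hD : Realizes w D S) (hS : ∀ a, 0 ≤ S a) {a : A} (hwa : w a ≠ 0) :
    S a ≠ 0 := by
  intro hSa
  have hden : 0 < 1 + ∑ b ∈ att D a, S b :=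
    add_pos_of_pos_of_nonneg one_pos (Finset.sum_nonneg fun b _ => hS b)
  have := hD a
  rw [hSa, eq_comm, div_eq_zero_iff] at this
  exact this.elim hwa hden.ne'

theorem div_one_add_sub_div_self {w s : ℝ} (hw : w ≠ 0) (hs : s ≠ 0) :
    w / (1 + (w - s) / s) = s := by
  rw [one_add_div hs, add_sub_cancel, div_div_cancel₀ hw]

theorem hc_attacker_substitution_general {A : Type*} [Fintype A] [DecidableEq A]
    (D Z : Finset (A × A)) (w S : A → ℝ) (x : A)
    (hSrange : ∀ a, 0 ≤ S a ∧ S a ≤ 1)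
    (hD : ∀ a, S a = w a / (1 + ∑ b ∈ att D a, S b))
    (hZ : ∀ p ∈ Z, p.2 = x)
    (hsum : w x ≠ 0 → ∑ p ∈ Z, S p.1 = (w x - S x) / S x) :
    ∀ a, S a = w a / (1 + ∑ b ∈ att (D.filter (fun p => p.2 ≠ x) ∪ Z) a, S b) := by
  intro a
  obtain rfl | hax := eq_or_ne a x
  · by_cases hwa : w a = 0
    · simpa [hwa] using hD a
    · have hSa : S a ≠ 0 := Realizes.ne_zero hD (fun b => (hSrange b).1) hwa
      rw [sum_att_filter_ne_union_self S hZ, hsum hwa, div_one_add_sub_div_self hwa hSa]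
  · rw [att_filter_ne_union_of_ne hZ hax]
    exact hD a

/-- Attacker substitution for the weighted h-categoriser semantics: if `D`
realizes `S`, and the attacks into `x` are replaced by a set `Z ⊆ A × {x}`
whose sources' degrees sum to `(w x − S x)/S x` (when `w x ≠ 0`), then the
resulting attack set also realizes `S`. -/
theorem hc_attacker_substitution {A : Type*} [Fintype A] [DecidableEq A]
    (D Z : Finset (A × A)) (w S : A → ℝ) (x : A)
    (hw : ∀ a, 0 ≤ w a ∧ w a ≤ 1) (hSrange : ∀ a, 0 ≤ S a ∧ S a ≤ 1)
    (hpos : ∀ a, 0 < w a → 0 < S a) (hzero : ∀ a, w a = 0 → S a = 0)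
    (hD : ∀ a, S a = w a / (1 + ∑ b ∈ att D a, S b))
    (hZ : ∀ p ∈ Z, p.2 = x)
    (hsum : w x ≠ 0 → ∑ p ∈ Z, S p.1 = (w x - S x) / S x) :
    ∀ a, S a = w a / (1 + ∑ b ∈ att (D.filter (fun p => p.2 ≠ x) ∪ Z) a, S b) :=
  hc_attacker_substitution_general D Z w S x hSrange hD hZ hsum
end

section
/- Under the weighted cardinality-based semantics, solutions are closed under attacker substitution preserving cardinality and sum: if D realizes S, x ∈ A with w(x) ≠ 0, Z ⊆ A × {x} with |Z| = k := ⌊(w(x) − S(x))/S(x)⌋, all sources in Z having positive weight, Σ_{(z,x) ∈ Z} S(z) = −k(S(x)·k + S(x) − w(x))/S(x), and D' = (D ∩ (A × (A \ {x}))) ∪ Z, then D' also realizes S. -/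
/-- Attacker substitution for the weighted cardinality-based semantics: the
attacks into `x` may be replaced by any set `Z` of `k = ⌊(w x − S x)/S x⌋`
attacks from positive-weight sources whose degrees sum to
`−k(S x · k + S x − w x)/S x`; the result still realizes `S`. -/
theorem cb_attacker_substitution {A : Type*} [Fintype A] [DecidableEq A]
    (D Z : Finset (A × A)) (w S : A → ℝ) (x : A)
    (hw : ∀ a, 0 ≤ w a ∧ w a ≤ 1) (hSrange : ∀ a, 0 ≤ S a ∧ S a ≤ 1)
    (hwx : w x ≠ 0) (hSx : S x ≠ 0)
    (hD : cbRealizes D w S)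
    (hZ : ∀ p ∈ Z, p.2 = x) (hZpos : ∀ p ∈ Z, 0 < w p.1)
    (hcard : (Z.card : ℤ) = ⌊(w x - S x) / S x⌋)
    (hsum : ∑ p ∈ Z, S p.1 = -((Z.card : ℝ) * (S x * Z.card + S x - w x)) / S x) :
    cbRealizes (D.filter (fun p => p.2 ≠ x) ∪ Z) w S := by
  have hwx' : 0 < w x := lt_of_le_of_ne (hw x).1 (Ne.symm hwx)
  have hSx' : 0 < S x := lt_of_le_of_ne (hSrange x).1 (Ne.symm hSx)
  intro a
  by_cases hax : a = x
  · subst hax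
    -- attacker set of a in new graph is the image of Z under fst
    have hinj : Set.InjOn Prod.fst (Z : Set (A × A)) := by
      intro p hp q hq h
      have := hZ p hp; have := hZ q hq
      ext
      · exact h
      · rw [hZ p hp, hZ q hq]
    have hatt : attStar (D.filter (fun p => p.2 ≠ a) ∪ Z) w a = Z.image Prod.fst := by
      ext b
      simp only [attStar, Finset.mem_filter, Finset.mem_univ, true_and,
        Finset.mem_image, Finset.mem_union]
      constructor
      · rintro ⟨hb | hb, hpos⟩
        · exact absurd hb.2 (by simp)
        · exact ⟨(b, a), hb, rfl⟩
      · rintro ⟨p, hp, rfl⟩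
        have hp2 : p = (p.1, a) := by
          have := hZ p hp; ext <;> simp [this]
        refine ⟨Or.inr ?_, hZpos p hp⟩
        rwa [← hp2]
    have hcardZ : (Z.image Prod.fst).card = Z.card :=
      Finset.card_image_of_injOn hinj
    have hsumZ : ∑ b ∈ Z.image Prod.fst, S b = ∑ p ∈ Z, S p.1 :=
      Finset.sum_image (fun p hp q hq h => hinj hp hq h)
    rw [hatt, hcardZ, hsumZ]
    by_cases hk : Z.card = 0
    · rw [hk]
      simp only [if_true]
      -- show S a = w a using hD and hcard (floor = 0)
      have := hD a
      by_cases h0 : (attStar D w a).card = 0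
      · rw [if_pos h0] at this; exact this
      · exfalso
        rw [if_neg h0] at this
        have hn : (1 : ℝ) ≤ (attStar D w a).card := by
          exact_mod_cast Nat.one_le_iff_ne_zero.mpr h0
        have hs : 0 ≤ ∑ b ∈ attStar D w a, S b :=
          Finset.sum_nonneg fun b _ => (hSrange b).1
        have hden : (2 : ℝ) ≤ 1 + (attStar D w a).card +
            (∑ b ∈ attStar D w a, S b) / (attStar D w a).card := by
          have : 0 ≤ (∑ b ∈ attStar D w a, S b) / (attStar D w a).card :=
            div_nonneg hs (by positivity)
          linarith
        have hle : S a ≤ w a / 2 := by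
          rw [this]
          apply div_le_div_of_nonneg_left hwx'.le (by norm_num) hden
        have h1 : (1 : ℝ) ≤ (w a - S a) / S a := by
          rw [le_div_iff₀ hSx']
          linarith
        have : (1 : ℤ) ≤ ⌊(w a - S a) / S a⌋ := by
          exact_mod_cast Int.le_floor.mpr (by exact_mod_cast h1)
        omega
    · rw [if_neg hk]
      rw [hsum]
      have hkR : ((Z.card : ℝ)) ≠ 0 := by
        exact_mod_cast hk
      have hden : 1 + (Z.card : ℝ) +
          (-((Z.card : ℝ) * (S a * Z.card + S a - w a)) / S a) / Z.card
          = w a / S a := by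
        field_simp
        ring
      rw [hden, div_div_eq_mul_div, mul_comm, mul_div_assoc, div_self hwx, mul_one]
  · -- attacker set unchanged
    have hatt : attStar (D.filter (fun p => p.2 ≠ x) ∪ Z) w a = attStar D w a := by
      ext b
      simp only [attStar, Finset.mem_filter, Finset.mem_univ, true_and,
        Finset.mem_union]
      constructor
      · rintro ⟨hb | hb, hpos⟩
        · exact ⟨hb.1, hpos⟩
        · exact absurd (hZ _ hb) hax
      · rintro ⟨hb, hpos⟩
        exact ⟨Or.inl ⟨hb, hax⟩, hpos⟩
    rw [hatt]
    exact hD a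
end

section
/- For the weighted max-based semantics with all degrees known, the complete attack-inference decision problem is characterized by a local condition: a set of attacks realizing S exists if and only if for every argument a, (i) w(a) = 0 ↔ S(a) = 0, and (ii) if S(a) ≠ 0 and w(a) ≠ S(a) then there exists b ∈ A with w(a)/S(a) = 1 + S(b). -/
/-!
The equation `S a = w a / (1 + m)` at an argument `a` sees its attackers only through
`m = max (0, degrees of the attackers)`, which is either `0` or the degree `S b` of a single
attacker `b`. As `1 + m > 0`, it can be met iff `w a = 0 ↔ S a = 0` and either `w a = S a`
(no attacker) or `w a / S a = 1 + S b` (the single attack `(b, a)`). The equations at different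
arguments involve disjoint sets of attacks `(·, a)`, so they can be solved independently.
-/

section maxDeg

variable {A : Type*} (S : A → ℝ)

lemma maxDeg_empty : maxDeg S ∅ = 0 := rfl

lemma maxDeg_nonneg (s : Finset A) : 0 ≤ maxDeg S s :=
  (Finset.le_fold_max 0).2 (Or.inl le_rfl)

lemma maxDeg_eq_zero_or_exists_mem (s : Finset A) :
    maxDeg S s = 0 ∨ ∃ b ∈ s, maxDeg S s = S b := by
  have hle := (Finset.fold_max_le (c := maxDeg S s)).1 le_rfl
  rcases (Finset.le_fold_max (maxDeg S s)).1 le_rfl with h | ⟨b, hb, h⟩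
  · exact Or.inl (le_antisymm h hle.1)
  · exact Or.inr ⟨b, hb, le_antisymm h (hle.2 b hb)⟩

lemma maxDeg_singleton {b : A} (hb : 0 ≤ S b) : maxDeg S {b} = S b := by
  simp [maxDeg, hb]

end maxDeg

lemma exists_att_eq {A : Type*} [Fintype A] [DecidableEq A] (t : A → Finset A) :
    ∃ D : Finset (A × A), ∀ a, att D a = t a :=
  ⟨Finset.univ.filter fun p => p.1 ∈ t p.2, fun a => by ext b; simp [att]⟩

section Local

variable {A : Type*} {S : A → ℝ} {w s : ℝ}

lemma local_condition_of_eq_div_maxDeg {t : Finset A} (h : s = w / (1 + maxDeg S t)) :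
    (w = 0 ↔ s = 0) ∧ (s ≠ 0 → w ≠ s → ∃ b, w / s = 1 + S b) := by
  have hpos : 0 < 1 + maxDeg S t := by linarith [maxDeg_nonneg S t]
  have hmul : w = s * (1 + maxDeg S t) := by rw [h, div_mul_cancel₀ _ hpos.ne']
  refine ⟨⟨fun hw => by rw [h, hw, zero_div], fun hs => by rw [hmul, hs, zero_mul]⟩, ?_⟩
  intro hs hws
  rcases maxDeg_eq_zero_or_exists_mem S t with h0 | ⟨b, -, hb⟩
  · exact absurd (by rw [h, h0, add_zero, div_one]) hws
  · exact ⟨b, by rw [← hb, hmul, mul_div_cancel_left₀ _ hs]⟩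

lemma exists_finset_eq_div_maxDeg (hS : ∀ b, 0 ≤ S b) (hzero : w = 0 ↔ s = 0)
    (hratio : s ≠ 0 → w ≠ s → ∃ b, w / s = 1 + S b) :
    ∃ t : Finset A, s = w / (1 + maxDeg S t) := by
  by_cases hattacked : s ≠ 0 ∧ w ≠ s
  · obtain ⟨hs, hws⟩ := hattacked
    obtain ⟨b, hb⟩ := hratio hs hws
    have hw : w ≠ 0 := fun hw => hs (hzero.1 hw)
    refine ⟨{b}, ?_⟩
    rw [maxDeg_singleton S (hS b), ← hb, div_div_cancel₀ hw]
  · push Not at hattacked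
    refine ⟨∅, ?_⟩
    rw [maxDeg_empty, add_zero, div_one]
    by_cases hs : s = 0
    · rw [hs, hzero.2 hs]
    · exact (hattacked hs).symm

end Local

theorem mb_decision_characterization_general {A : Type*} [Fintype A] [DecidableEq A]
    (w S : A → ℝ)
    (hS : ∀ a, 0 ≤ S a ∧ S a ≤ 1) :
    (∃ D : Finset (A × A), ∀ a, S a = w a / (1 + maxDeg S (att D a))) ↔
    (∀ a, (w a = 0 ↔ S a = 0) ∧
      (S a ≠ 0 → w a ≠ S a → ∃ b, w a / S a = 1 + S b)) := by
  constructor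
  · rintro ⟨D, hD⟩ a
    exact local_condition_of_eq_div_maxDeg (hD a)
  · intro h
    choose t ht using fun a =>
      exists_finset_eq_div_maxDeg (fun b => (hS b).1) (h a).1 (h a).2
    obtain ⟨D, hD⟩ := exists_att_eq t
    exact ⟨D, fun a => by rw [hD a]; exact ht a⟩

/-- Local characterization of the complete attack-inference decision problem
for the weighted max-based semantics: an attack set realizing `S` exists iff
for every argument `a`, (i) `w a = 0 ↔ S a = 0` and (ii) whenever `S a ≠ 0`
and `w a ≠ S a`, there is some `b` with `w a / S a = 1 + S b`. -/
theorem mb_decision_characterization {A : Type*} [Fintype A] [DecidableEq A]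
    (w S : A → ℝ)
    (hw : ∀ a, 0 ≤ w a ∧ w a ≤ 1) (hS : ∀ a, 0 ≤ S a ∧ S a ≤ 1) :
    (∃ D : Finset (A × A), ∀ a, S a = w a / (1 + maxDeg S (att D a))) ↔
    (∀ a, (w a = 0 ↔ S a = 0) ∧
      (S a ≠ 0 → w a ≠ S a → ∃ b, w a / S a = 1 + S b)) :=
  mb_decision_characterization_general w S hS
end
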